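/- If C is an irreducible nonnegative column-stochastic N×N matrix (N ≥ 1), then there exists a vector x with all components strictly positive satisfying Cx = x, and x is unique up to a positive scalar multiple. -/
import Mathlib


/-- A nonnegative matrix is irreducible if for any pair of indices some power
of the matrix has a positive entry there (strong connectivity of the
associated directed graph). -/
def MatIrreducible {N : ℕ} (C : Matrix (Fin N) (Fin N) ℝ) : Prop :=
  ∀ i j, ∃ n > 0, 0 < (C ^ n) i j

lemma matPow_nonneg {N : ℕ} (C : Matrix (Fin N) (Fin N) ℝ)
    (h : ∀ i j, 0 ≤ C i j) : ∀ n i j, 0 ≤ (C ^ n) i j := by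
  intro n
  induction n with
  | zero => intro i j; by_cases h' : i = j <;> simp [Matrix.one_apply, h']
  | succ n ih =>
    intro i j
    rw [pow_succ, Matrix.mul_apply]
    exact Finset.sum_nonneg fun k _ => mul_nonneg (ih i k) (h k j)

lemma fixed_pow {N : ℕ} (C : Matrix (Fin N) (Fin N) ℝ) (y : Fin N → ℝ)
    (hfix : C.mulVec y = y) : ∀ n, (C ^ n).mulVec y = y := by
  intro n
  induction n with
  | zero => simp [Matrix.one_mulVec]
  | succ n ih => rw [pow_succ, ← Matrix.mulVec_mulVec, hfix, ih]

lemma fixed_pos {N : ℕ} (C : Matrix (Fin N) (Fin N) ℝ)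
    (hnonneg : ∀ i j, 0 ≤ C i j) (hirr : MatIrreducible C)
    (y : Fin N → ℝ) (hy0 : ∀ i, 0 ≤ y i) (hfix : C.mulVec y = y)
    (j : Fin N) (hj : 0 < y j) : ∀ i, 0 < y i := by
  intro i
  obtain ⟨n, _, hpos⟩ := hirr i j
  have hyi : ∑ k, (C ^ n) i k * y k = y i := congrFun (fixed_pow C y hfix n) i
  calc (0:ℝ) < (C ^ n) i j * y j := mul_pos hpos hj
    _ ≤ ∑ k, (C ^ n) i k * y k :=
        Finset.single_le_sum (f := fun k => (C ^ n) i k * y k)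
          (fun k _ => mul_nonneg (matPow_nonneg C hnonneg n i k) (hy0 k))
          (Finset.mem_univ j)
    _ = y i := hyi

/-- An irreducible column-stochastic matrix has a strictly positive fixed
vector, unique up to a positive scalar multiple. -/
theorem irreducible_column_stochastic_perron (N : ℕ) (hN : 0 < N)
    (C : Matrix (Fin N) (Fin N) ℝ)
    (hnonneg : ∀ i j, 0 ≤ C i j)
    (hcol : ∀ j, ∑ i, C i j = 1)
    (hirr : MatIrreducible C) :
    ∃ x : Fin N → ℝ, (∀ i, 0 < x i) ∧ C.mulVec x = x ∧
      ∀ x' : Fin N → ℝ, (∀ i, 0 < x' i) → C.mulVec x' = x' →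
        ∃ c : ℝ, 0 < c ∧ x' = c • x := by
  -- Step 1: det (C - 1) = 0, so there is a nonzero fixed vector x₀
  have hdet : (C - 1).det = 0 := by
    rw [← Matrix.exists_vecMul_eq_zero_iff]
    refine ⟨fun _ => 1, ?_, ?_⟩
    · intro h
      exact one_ne_zero (congrFun h ⟨0, hN⟩)
    · funext j
      simp [Matrix.vecMul, dotProduct, Matrix.sub_apply, Matrix.one_apply,
        Finset.sum_sub_distrib, hcol j]
  obtain ⟨x₀, hx₀ne, hx₀⟩ := (Matrix.exists_mulVec_eq_zero_iff).2 hdet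
  have hx₀fix : C.mulVec x₀ = x₀ := by
    have := hx₀
    rw [Matrix.sub_mulVec, Matrix.one_mulVec, sub_eq_zero] at this
    exact this
  -- Step 2: y = |x₀| is a nonnegative fixed vector
  set y : Fin N → ℝ := fun i => |x₀ i| with hy
  have hy0 : ∀ i, 0 ≤ y i := fun i => abs_nonneg _
  have hle : ∀ i, y i ≤ C.mulVec y i := by
    intro i
    have : y i = |C.mulVec x₀ i| := by rw [hx₀fix]
    rw [this]
    calc |C.mulVec x₀ i| = |∑ j, C i j * x₀ j| := rfl
      _ ≤ ∑ j, |C i j * x₀ j| := Finset.abs_sum_le_sum_abs _ _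
      _ = ∑ j, C i j * y j := by
          refine Finset.sum_congr rfl fun j _ => ?_
          rw [abs_mul, abs_of_nonneg (hnonneg i j)]
      _ = C.mulVec y i := rfl
  have hsum : ∑ i, C.mulVec y i = ∑ i, y i := by
    calc ∑ i, C.mulVec y i = ∑ i, ∑ j, C i j * y j := rfl
      _ = ∑ j, ∑ i, C i j * y j := Finset.sum_comm
      _ = ∑ j, (∑ i, C i j) * y j := by
          refine Finset.sum_congr rfl fun j _ => ?_
          rw [Finset.sum_mul]
      _ = ∑ j, y j := by
          refine Finset.sum_congr rfl fun j _ => ?_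
          rw [hcol j, one_mul]
  have hyfix : C.mulVec y = y := by
    funext i
    exact ((Finset.sum_eq_sum_iff_of_le (fun i _ => hle i)).1 hsum.symm i
      (Finset.mem_univ i)).symm
  -- Step 3: y is strictly positive
  obtain ⟨j₀, hj₀⟩ : ∃ j, x₀ j ≠ 0 := Function.ne_iff.1 hx₀ne
  have hypos : ∀ i, 0 < y i :=
    fixed_pos C hnonneg hirr y hy0 hyfix j₀ (abs_pos.2 hj₀)
  refine ⟨y, hypos, hyfix, ?_⟩
  -- Step 4: uniqueness
  intro x' hx' hx'fix
  obtain ⟨k, _, hk⟩ := Finset.exists_min_image Finset.univ (fun i => x' i / y i)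
    ⟨⟨0, hN⟩, Finset.mem_univ _⟩
  set c : ℝ := x' k / y k with hc
  have hcpos : 0 < c := div_pos (hx' k) (hypos k)
  set z : Fin N → ℝ := x' - c • y with hz
  have hz0 : ∀ i, 0 ≤ z i := by
    intro i
    have h1 : c ≤ x' i / y i := hk i (Finset.mem_univ i)
    have h2 : c * y i ≤ x' i := (le_div_iff₀ (hypos i)).1 h1
    simpa [hz, sub_nonneg] using h2
  have hzk : z k = 0 := by
    simp only [hz, Pi.sub_apply, Pi.smul_apply, smul_eq_mul, hc]
    rw [div_mul_cancel₀ _ (ne_of_gt (hypos k))]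
    ring
  have hzfix : C.mulVec z = z := by
    rw [hz, Matrix.mulVec_sub, Matrix.mulVec_smul, hx'fix, hyfix]
  have hzzero : z = 0 := by
    by_contra hne
    obtain ⟨i, hi⟩ := Function.ne_iff.1 hne
    have : 0 < z i := lt_of_le_of_ne (hz0 i) (Ne.symm hi)
    have := fixed_pos C hnonneg hirr z hz0 hzfix i this k
    rw [hzk] at this
    exact lt_irrefl 0 this
  refine ⟨c, hcpos, ?_⟩
  have := sub_eq_zero.1 (hzzero : x' - c • y = 0)
  exact this
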